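/- arXiv:2407.21339 — 3 statements merged into one kernel-verified Lean document; each statement's English description precedes it below -/
import Mathlib

section
/- With K diagonal positive-definite, r1 < r2 positive odd integers, and M symmetric positive-definite, for all v in R^n: vᵀ K [v]^{r1/r2} ≥ λ_min(K) (2k(v)/λ_max(M))^{(r1+r2)/(2r2)}, where k(v) = (1/2) vᵀ M v and [v]^{r1/r2} is the componentwise signed power. -/
/-!
Write `t = (r₁ + r₂) / (2 r₂) ≤ 1`. Since `vᵢ [vᵢ]^{r₁/r₂} = |vᵢ|^{2t}`, the left side is
`∑ kᵢ (vᵢ²)^t ≥ (min k) ∑ (vᵢ²)^t`. For `0 < t ≤ 1` the map `x ↦ x ^ t` is subadditive on `[0, ∞)`,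
so `∑ (vᵢ²)^t ≥ ‖v‖^{2t}`, and the Rayleigh bound `vᵀ M v ≤ λ_max(M) ‖v‖²` finishes the argument.
-/

open Matrix MatrixOrder Finset

theorem Real.rpow_sum_le_sum_rpow {ι : Type*} (s : Finset ι) {f : ι → ℝ} {p : ℝ}
    (hf : ∀ i ∈ s, 0 ≤ f i) (hp : 0 < p) (hp1 : p ≤ 1) :
    (∑ i ∈ s, f i) ^ p ≤ ∑ i ∈ s, f i ^ p := by
  induction s using Finset.cons_induction with
  | empty => simp [Real.zero_rpow hp.ne']
  | cons a s ha ih =>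
    rw [sum_cons, sum_cons]
    have hs : ∀ i ∈ s, 0 ≤ f i := fun i hi => hf i (mem_cons_of_mem hi)
    calc (f a + ∑ i ∈ s, f i) ^ p ≤ f a ^ p + (∑ i ∈ s, f i) ^ p :=
          Real.rpow_add_le_add_rpow (hf a (mem_cons_self a s)) (sum_nonneg hs) hp.le hp1
      _ ≤ f a ^ p + ∑ i ∈ s, f i ^ p := by gcongr; exact ih hs

theorem Real.mul_sign_mul_abs_rpow (x : ℝ) {q : ℝ} (hq : 1 + q ≠ 0) :
    x * (Real.sign x * |x| ^ q) = |x| ^ (1 + q) := by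
  have hsign : x * Real.sign x = |x| := by
    rcases lt_trichotomy x 0 with h | rfl | h
    · rw [Real.sign_of_neg h, abs_of_neg h, mul_neg_one]
    · simp
    · rw [Real.sign_of_pos h, abs_of_pos h, mul_one]
  rw [← mul_assoc, hsign, Real.rpow_add' (abs_nonneg x) hq, Real.rpow_one]

theorem Real.ciInf_mul_sum_le_sum_mul {ι : Type*} [Fintype ι] (k a : ι → ℝ)
    (ha : ∀ i, 0 ≤ a i) : (⨅ i, k i) * ∑ i, a i ≤ ∑ i, k i * a i := by
  rw [mul_sum]
  exact sum_le_sum fun i _ =>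
    mul_le_mul_of_nonneg_right (ciInf_le (Set.finite_range k).bddBelow i) (ha i)

section Rayleigh

variable {ι : Type*} [Fintype ι] [DecidableEq ι] {M : Matrix ι ι ℝ}

theorem Matrix.IsHermitian.dotProduct_mulVec_le_iSup_eigenvalues_mul (hM : M.IsHermitian)
    (v : ι → ℝ) : v ⬝ᵥ M *ᵥ v ≤ (⨆ i, hM.eigenvalues i) * (v ⬝ᵥ v) := by
  have hle : M ≤ algebraMap ℝ _ (⨆ i, hM.eigenvalues i) := by
    refine le_algebraMap_of_spectrum_le ?_ hM
    rw [hM.spectrum_real_eq_range_eigenvalues]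
    rintro _ ⟨i, rfl⟩
    exact le_ciSup (Set.finite_range _).bddAbove i
  simpa only [Algebra.algebraMap_eq_smul_one, sub_mulVec, smul_mulVec, one_mulVec,
    dotProduct_sub, dotProduct_smul, star_trivial, smul_eq_mul, sub_nonneg]
    using (Matrix.le_iff.mp hle).dotProduct_mulVec_nonneg v

theorem Matrix.PosSemidef.dotProduct_mulVec_div_iSup_eigenvalues_le (hM : M.IsHermitian)
    (hMpsd : M.PosSemidef) (v : ι → ℝ) : (v ⬝ᵥ M *ᵥ v) / (⨆ i, hM.eigenvalues i) ≤ v ⬝ᵥ v :=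
  div_le_of_le_mul₀ (Real.iSup_nonneg hMpsd.eigenvalues_nonneg)
    (by simpa only [star_trivial] using dotProduct_star_self_nonneg v)
    (by simpa only [mul_comm] using hM.dotProduct_mulVec_le_iSup_eigenvalues_mul v)

end Rayleigh

theorem signed_power_kinetic_lower_bound_general (n : ℕ) (k : Fin n → ℝ) (hk : ∀ i, 0 < k i)
    (M : Matrix (Fin n) (Fin n) ℝ) (hM : M.IsHermitian) (hMpd : M.PosDef)
    (r1 r2 : ℕ) (hlt : r1 < r2)
    (v : Fin n → ℝ) :
    v ⬝ᵥ (Matrix.diagonal k).mulVec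
        (fun i => Real.sign (v i) * |v i| ^ ((r1 : ℝ) / r2))
      ≥ (⨅ i, k i) *
        (2 * ((1 / 2) * (v ⬝ᵥ M.mulVec v)) / (⨆ i, hM.eigenvalues i))
          ^ (((r1 : ℝ) + r2) / (2 * r2)) := by
  set t : ℝ := ((r1 : ℝ) + r2) / (2 * r2)
  have hr2 : (0 : ℝ) < r2 := by exact_mod_cast (Nat.zero_le r1).trans_lt hlt
  have hr12 : (r1 : ℝ) ≤ r2 := by exact_mod_cast hlt.le
  have ht0 : 0 < t := by positivity
  have ht1 : t ≤ 1 := by rw [div_le_one (by positivity)]; linarith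
  have h2t : 1 + (r1 : ℝ) / r2 = 2 * t := by simp only [t]; field_simp; ring
  have hkin_nonneg : 0 ≤ 2 * ((1 / 2) * (v ⬝ᵥ M *ᵥ v)) / (⨆ i, hM.eigenvalues i) :=
    div_nonneg (by simpa using hMpd.posSemidef.dotProduct_mulVec_nonneg v)
      (Real.iSup_nonneg fun i => (hMpd.eigenvalues_pos i).le)
  have hkin : 2 * ((1 / 2) * (v ⬝ᵥ M *ᵥ v)) / (⨆ i, hM.eigenvalues i) ≤ v ⬝ᵥ v := by
    simpa using hMpd.posSemidef.dotProduct_mulVec_div_iSup_eigenvalues_le hM v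
  calc (⨅ i, k i) * (2 * ((1 / 2) * (v ⬝ᵥ M *ᵥ v)) / (⨆ i, hM.eigenvalues i)) ^ t
      ≤ (⨅ i, k i) * ∑ i, (v i ^ 2) ^ t := by
        have hk0 : 0 ≤ ⨅ i, k i := Real.iInf_nonneg fun i => (hk i).le
        gcongr
        refine (Real.rpow_le_rpow hkin_nonneg hkin ht0.le).trans ?_
        simpa [dotProduct, sq] using
          Real.rpow_sum_le_sum_rpow univ (fun i _ => sq_nonneg (v i)) ht0 ht1
    _ ≤ ∑ i, k i * (v i ^ 2) ^ t :=
        Real.ciInf_mul_sum_le_sum_mul k _ fun i => Real.rpow_nonneg (sq_nonneg _) _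
    _ = v ⬝ᵥ diagonal k *ᵥ fun i => Real.sign (v i) * |v i| ^ ((r1 : ℝ) / r2) := by
        simp only [dotProduct, mulVec_diagonal]
        refine sum_congr rfl fun i _ => ?_
        rw [mul_left_comm, Real.mul_sign_mul_abs_rpow _ (by positivity), h2t, ← sq_abs,
          ← Real.rpow_natCast, ← Real.rpow_mul (abs_nonneg _), Nat.cast_ofNat]

theorem signed_power_kinetic_lower_bound (n : ℕ) (k : Fin n → ℝ) (hk : ∀ i, 0 < k i)
    (M : Matrix (Fin n) (Fin n) ℝ) (hM : M.IsHermitian) (hMpd : M.PosDef)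
    (r1 r2 : ℕ) (h1 : Odd r1) (h2 : Odd r2) (h0 : 0 < r1) (hlt : r1 < r2)
    (v : Fin n → ℝ) :
    v ⬝ᵥ (Matrix.diagonal k).mulVec
        (fun i => Real.sign (v i) * |v i| ^ ((r1 : ℝ) / r2))
      ≥ (⨅ i, k i) *
        (2 * ((1 / 2) * (v ⬝ᵥ M.mulVec v)) / (⨆ i, hM.eigenvalues i))
          ^ (((r1 : ℝ) + r2) / (2 * r2)) :=
  signed_power_kinetic_lower_bound_general n k hk M hM hMpd r1 r2 hlt v
end

section
/- Suppose a differentiable nonnegative function V₁ : [0,∞) → R satisfies V₁'(t) ≤ −ψ √(2V₁(t)) · (√(2V₁(t)) + c)^{s} for all t, where ψ > 0, c ≥ 0, and 0 < s < 1. Then V₁ reaches zero within time T₁ = (1/(ψ(1−s))) ((√(2V₁(0)) + c)^{1−s} − c^{1−s}). -/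
theorem finite_time_convergence_above (V₁ : ℝ → ℝ) (ψ c s : ℝ)
    (hψ : 0 < ψ) (hc : 0 ≤ c) (hs0 : 0 < s) (hs1 : s < 1)
    (hdiff : Differentiable ℝ V₁) (hnonneg : ∀ t, 0 ≤ V₁ t)
    (hineq : ∀ t, 0 ≤ t →
      deriv V₁ t ≤ -ψ * Real.sqrt (2 * V₁ t) * (Real.sqrt (2 * V₁ t) + c) ^ s) :
    ∃ t, 0 ≤ t ∧
      t ≤ (1 / (ψ * (1 - s))) *
        ((Real.sqrt (2 * V₁ 0) + c) ^ (1 - s) - c ^ (1 - s)) ∧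
      V₁ t = 0 := by
  by_contra h
  push_neg at h
  set T := (1 / (ψ * (1 - s))) *
      ((Real.sqrt (2 * V₁ 0) + c) ^ (1 - s) - c ^ (1 - s)) with hTdef
  have hs1' : (0:ℝ) < 1 - s := by linarith
  have hψs : 0 < ψ * (1 - s) := by positivity
  have hT0 : 0 ≤ T := by
    have : c ^ (1 - s) ≤ (Real.sqrt (2 * V₁ 0) + c) ^ (1 - s) :=
      Real.rpow_le_rpow hc (by nlinarith [Real.sqrt_nonneg (2 * V₁ 0)]) hs1'.le
    have h1 : 0 ≤ 1 / (ψ * (1 - s)) := by positivity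
    nlinarith
  have hpos : ∀ t, 0 ≤ t → t ≤ T → 0 < V₁ t := fun t ht htT =>
    lt_of_le_of_ne (hnonneg t) (Ne.symm (h t ht htT))
  set g : ℝ → ℝ := fun t => (Real.sqrt (2 * V₁ t) + c) ^ (1 - s) + ψ * (1 - s) * t
    with hgdef
  have hcont : ContinuousOn g (Set.Icc 0 T) := by
    apply Continuous.continuousOn
    apply Continuous.add
    · exact (((continuous_const.mul hdiff.continuous).sqrt.add continuous_const).rpow_const
        (fun x => Or.inr hs1'.le))
    · exact continuous_const.mul continuous_id
  have hderiv : ∀ t ∈ Set.Ioo (0:ℝ) T,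
      HasDerivAt g ((2 * deriv V₁ t / (2 * Real.sqrt (2 * V₁ t))) * (1 - s) *
        (Real.sqrt (2 * V₁ t) + c) ^ (1 - s - 1) + ψ * (1 - s) * 1) t := by
    intro t ht
    have hV : 0 < V₁ t := hpos t ht.1.le ht.2.le
    have hA : 0 < Real.sqrt (2 * V₁ t) := Real.sqrt_pos.mpr (by linarith)
    have h1 : HasDerivAt (fun x => 2 * V₁ x) (2 * deriv V₁ t) t :=
      ((hdiff t).hasDerivAt).const_mul 2
    have h2 := h1.sqrt (by positivity)
    have h3 := (h2.add_const c).rpow_const (p := 1 - s)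
      (Or.inl (by positivity))
    exact h3.add ((hasDerivAt_id t).const_mul (ψ * (1 - s)))
  have hanti : AntitoneOn g (Set.Icc 0 T) := by
    apply antitoneOn_of_deriv_nonpos (convex_Icc 0 T) hcont
    · intro t ht
      rw [interior_Icc] at ht
      exact (hderiv t ht).differentiableAt.differentiableWithinAt
    · intro t ht
      rw [interior_Icc] at ht
      rw [(hderiv t ht).deriv]
      have hV : 0 < V₁ t := hpos t ht.1.le ht.2.le
      set A := Real.sqrt (2 * V₁ t) with hA
      have hApos : 0 < A := Real.sqrt_pos.mpr (by linarith)
      have hBpos : 0 < A + c := by linarith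
      have hBs : 0 < (A + c) ^ s := Real.rpow_pos_of_pos hBpos s
      have hBms : 0 < (A + c) ^ (1 - s - 1) := Real.rpow_pos_of_pos hBpos _
      have hVd : deriv V₁ t ≤ -ψ * A * (A + c) ^ s := hineq t ht.1.le
      have hprod : (A + c) ^ s * (A + c) ^ (1 - s - 1) = 1 := by
        rw [← Real.rpow_add hBpos]
        norm_num
      have key : (2 * deriv V₁ t / (2 * A)) * (1 - s) * (A + c) ^ (1 - s - 1)
          ≤ -(ψ * (1 - s)) := by
        have h5 : 2 * deriv V₁ t / (2 * A) = deriv V₁ t / A := by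
          field_simp
        rw [h5]
        have h6 : deriv V₁ t / A ≤ -ψ * (A + c) ^ s := by
          rw [div_le_iff₀ hApos]
          nlinarith
        have h7 : deriv V₁ t / A * (1 - s) * (A + c) ^ (1 - s - 1)
            ≤ (-ψ * (A + c) ^ s) * (1 - s) * (A + c) ^ (1 - s - 1) := by
          have := mul_le_mul_of_nonneg_right h6 hs1'.le
          exact mul_le_mul_of_nonneg_right this hBms.le
        calc deriv V₁ t / A * (1 - s) * (A + c) ^ (1 - s - 1)
            ≤ (-ψ * (A + c) ^ s) * (1 - s) * (A + c) ^ (1 - s - 1) := h7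
          _ = -(ψ * (1 - s)) * ((A + c) ^ s * (A + c) ^ (1 - s - 1)) := by ring
          _ = -(ψ * (1 - s)) := by rw [hprod]; ring
      linarith
  have hmem0 : (0:ℝ) ∈ Set.Icc (0:ℝ) T := ⟨le_refl 0, hT0⟩
  have hmemT : T ∈ Set.Icc (0:ℝ) T := ⟨hT0, le_refl T⟩
  have hgT : g T ≤ g 0 := hanti hmem0 hmemT hT0
  have hψT : ψ * (1 - s) * T =
      (Real.sqrt (2 * V₁ 0) + c) ^ (1 - s) - c ^ (1 - s) := by
    rw [hTdef]; field_simp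
  have hFT : (Real.sqrt (2 * V₁ T) + c) ^ (1 - s) ≤ c ^ (1 - s) := by
    have : (Real.sqrt (2 * V₁ T) + c) ^ (1 - s) + ψ * (1 - s) * T
        ≤ (Real.sqrt (2 * V₁ 0) + c) ^ (1 - s) + ψ * (1 - s) * 0 := hgT
    linarith [hψT]
  have hVT : 0 < V₁ T := hpos T hT0 (le_refl T)
  have hAT : 0 < Real.sqrt (2 * V₁ T) := Real.sqrt_pos.mpr (by linarith)
  have : c ^ (1 - s) < (Real.sqrt (2 * V₁ T) + c) ^ (1 - s) :=
    Real.rpow_lt_rpow hc (by linarith) hs1'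
  linarith
end

section
/- Suppose a differentiable function V₁ : [0,∞) → [0,∞) satisfies V₁'(t) ≤ −ψ √(2V₁(t)) (c − √(2V₁(t)))^{s} with c > √(2V₁(0)) > 0, ψ > 0, 0 < s < 1. Then V₁ reaches zero within time T₂ = (1/(ψ(1−s)))(c^{1−s} − (c − √(2V₁(0)))^{1−s}). -/
/-!
Suppose `V₁` stays positive on `[0, T₂]` and put `f = √(2 V₁)`. At the level `V₁ = V₁ 0` the
derivative of `V₁` is negative, so `V₁` never rises above `V₁ 0`, hence `f < c` throughout.
Then `f' = V₁' / f ≤ -ψ (c - f)^s`, so `(c - f)^(1-s)` grows at rate at least `ψ (1 - s)`;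
after time `T₂` it has reached `c^(1-s)`, which forces `f T₂ ≤ 0`, a contradiction.
-/

open Set

theorem apply_le_apply_of_deriv_neg_of_apply_eq {V : ℝ → ℝ} {a t : ℝ} (hV : Differentiable ℝ V)
    (h : ∀ x, a ≤ x → V x = V a → deriv V x < 0) (ht : a ≤ t) : V t ≤ V a :=
  image_le_of_deriv_right_lt_deriv_boundary (B := fun _ => V a) (B' := fun _ => 0)
    hV.continuous.continuousOn (fun x _ => (hV x).hasDerivAt.hasDerivWithinAt) le_rfl
    (fun _ => hasDerivAt_const _ _) (fun x hx => h x hx.1) ⟨ht, le_rfl⟩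

theorem HasDerivAt.sqrt_two_mul {V : ℝ → ℝ} {V' x : ℝ} (hV : HasDerivAt V V' x) (hx : 0 < V x) :
    HasDerivAt (fun t => √(2 * V t)) (V' / √(2 * V x)) x := by
  convert (hV.const_mul 2).sqrt (by positivity) using 1
  rw [mul_div_mul_left _ _ two_ne_zero]

theorem mul_sub_le_rpow_sub_rpow_of_deriv_le {f f' : ℝ → ℝ} {a b c ψ s : ℝ} (hs : s < 1)
    (hab : a ≤ b) (hf : ∀ t ∈ Icc a b, HasDerivAt f (f' t) t) (hfc : ∀ t ∈ Icc a b, f t < c)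
    (hf' : ∀ t ∈ Icc a b, f' t ≤ -ψ * (c - f t) ^ s) :
    ψ * (1 - s) * (b - a) ≤ (c - f b) ^ (1 - s) - (c - f a) ^ (1 - s) := by
  have hg : ∀ t ∈ Icc a b, HasDerivAt (fun t => (c - f t) ^ (1 - s))
      (-f' t * (1 - s) * (c - f t) ^ (1 - s - 1)) t := fun t ht =>
    ((hf t ht).const_sub c).rpow_const (Or.inl (sub_pos.2 (hfc t ht)).ne')
  refine (convex_Icc a b).mul_sub_le_image_sub_of_le_deriv
    (fun t ht => (hg t ht).continuousAt.continuousWithinAt)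
    (fun t ht => (hg t (interior_subset ht)).differentiableAt.differentiableWithinAt)
    (fun t ht => ?_) a (left_mem_Icc.2 hab) b (right_mem_Icc.2 hab) hab
  have ht := interior_subset ht
  have hgap : 0 < c - f t := sub_pos.2 (hfc t ht)
  rw [(hg t ht).deriv]
  calc ψ * (1 - s) = ψ * (c - f t) ^ s * (1 - s) * (c - f t) ^ (1 - s - 1) := by
        rw [show 1 - s - 1 = -s by ring, Real.rpow_neg hgap.le]
        field_simp
    _ ≤ -f' t * (1 - s) * (c - f t) ^ (1 - s - 1) := by
        gcongr
        linarith [hf' t ht]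

theorem finite_time_convergence_below_general (V₁ : ℝ → ℝ) (ψ c s : ℝ)
    (hψ : 0 < ψ) (hs1 : s < 1)
    (hV0 : 0 < Real.sqrt (2 * V₁ 0)) (hc : Real.sqrt (2 * V₁ 0) < c)
    (hdiff : Differentiable ℝ V₁) (hnonneg : ∀ t, 0 ≤ V₁ t)
    (hineq : ∀ t, 0 ≤ t →
      deriv V₁ t ≤ -ψ * Real.sqrt (2 * V₁ t) * (c - Real.sqrt (2 * V₁ t)) ^ s) :
    ∃ t, 0 ≤ t ∧
      t ≤ (1 / (ψ * (1 - s))) *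
        (c ^ (1 - s) - (c - Real.sqrt (2 * V₁ 0)) ^ (1 - s)) ∧
      V₁ t = 0 := by
  set T := (1 / (ψ * (1 - s))) * (c ^ (1 - s) - (c - √(2 * V₁ 0)) ^ (1 - s))
  have hs : 0 < 1 - s := sub_pos.2 hs1
  have hψT : ψ * (1 - s) * T = c ^ (1 - s) - (c - √(2 * V₁ 0)) ^ (1 - s) := by
    simp only [T]
    field_simp
  have hT : 0 ≤ T := by
    have : (c - √(2 * V₁ 0)) ^ (1 - s) ≤ c ^ (1 - s) :=
      Real.rpow_le_rpow (by linarith) (by linarith) hs.le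
    nlinarith [mul_pos hψ hs]
  have hdecay : ∀ t, 0 ≤ t → V₁ t ≤ V₁ 0 := by
    refine fun t ht => apply_le_apply_of_deriv_neg_of_apply_eq hdiff (fun x hx hx0 => ?_) ht
    have hgap : 0 < (c - √(2 * V₁ 0)) ^ s := Real.rpow_pos_of_pos (sub_pos.2 hc) s
    rw [← hx0] at hgap hV0
    nlinarith [hineq x hx, mul_pos (mul_pos hψ hV0) hgap]
  have hbelow : ∀ t, 0 ≤ t → √(2 * V₁ t) < c := fun t ht =>
    (Real.sqrt_le_sqrt (by linarith [hdecay t ht])).trans_lt hc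
  by_contra! hne
  have hpos : ∀ t ∈ Icc 0 T, 0 < V₁ t := fun t ht => (hnonneg t).lt_of_ne' (hne t ht.1 ht.2)
  have hrate := mul_sub_le_rpow_sub_rpow_of_deriv_le (ψ := ψ) hs1 hT
    (fun t ht => (hdiff t).hasDerivAt.sqrt_two_mul (hpos t ht)) (fun t ht => hbelow t ht.1)
    (fun t ht => (div_le_iff₀ (Real.sqrt_pos.2 (by linarith [hpos t ht]))).2
      (by linarith [hineq t ht.1]))
  have hdrop : (c - √(2 * V₁ T)) ^ (1 - s) < c ^ (1 - s) :=
    Real.rpow_lt_rpow (by linarith [hbelow T hT])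
      (by linarith [Real.sqrt_pos.2 (by linarith [hpos T ⟨hT, le_rfl⟩] : 0 < 2 * V₁ T)]) hs
  linarith

theorem finite_time_convergence_below (V₁ : ℝ → ℝ) (ψ c s : ℝ)
    (hψ : 0 < ψ) (hs0 : 0 < s) (hs1 : s < 1)
    (hV0 : 0 < Real.sqrt (2 * V₁ 0)) (hc : Real.sqrt (2 * V₁ 0) < c)
    (hdiff : Differentiable ℝ V₁) (hnonneg : ∀ t, 0 ≤ V₁ t)
    (hineq : ∀ t, 0 ≤ t →
      deriv V₁ t ≤ -ψ * Real.sqrt (2 * V₁ t) * (c - Real.sqrt (2 * V₁ t)) ^ s) :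
    ∃ t, 0 ≤ t ∧
      t ≤ (1 / (ψ * (1 - s))) *
        (c ^ (1 - s) - (c - Real.sqrt (2 * V₁ 0)) ^ (1 - s)) ∧
      V₁ t = 0 :=
  finite_time_convergence_below_general V₁ ψ c s hψ hs1 hV0 hc hdiff hnonneg hineq
end
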